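/- The lattice of strong Weihrauch degrees is not distributive: there exist single-valued partial functions f, g, h : ⊆ 2^ω → 2^ω such that (f ⊞ g) ⊓ h ≰_sW (f ⊓ h) ⊞ (g ⊓ h). -/

import Mathlib

attribute [local instance] Classical.propDecidable

namespace StrongWeihrauch

noncomputable section

/-! ### Cantor space, monotone approximations, and the evaluation map -/

/-- Cantor space `2^ω`; we identify subsets of `ω` with their characteristic functions. -/
abbrev Cantor : Type := ℕ → Bool

/-- The coded triple `⟨n,s,i⟩`. -/
def tpl (n s i : ℕ) : ℕ := Nat.pair n (Nat.pair s i)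

/-- A monotone approximation (Definition 3.1): every element has the form `⟨n,s,i⟩` with
`i < 2`; for each `n` there is at most one pair `(s,i)` with `⟨n,s,i⟩ ∈ a`; and the stages `s`
are strictly increasing in `n`. -/
def MonotoneApprox (a : Cantor) : Prop :=
  (∀ k, a k = true → ∃ n s i, i < 2 ∧ k = tpl n s i) ∧
  (∀ n s t i j, a (tpl n s i) = true → a (tpl n t j) = true → s = t ∧ i = j) ∧
  (∀ m n s t i j, a (tpl m s i) = true → a (tpl n t j) = true → m < n → s < t)

/-- A total monotone approximation: every `n` gets a value. -/
def TotalMonotoneApprox (a : Cantor) : Prop :=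
  MonotoneApprox a ∧ ∀ n, ∃ s i, i < 2 ∧ a (tpl n s i) = true

/-- The value of the evaluation map `e` on a (total) monotone approximation:
`eVal a n = i` iff `⟨n,s,i⟩ ∈ a` for some `s`. -/
def eVal (a : Cantor) : Cantor := fun n => decide (∃ s, a (tpl n s 1) = true)

/-- The evaluation map `e : ⊆ 2^ω → 2^ω`, the partial function whose domain is the set of
total monotone approximations `a`, with `e(a)(n) = i` iff `⟨n,s,i⟩ ∈ a` for some `s`. -/
def evalMA : Cantor →. Cantor := fun a => ⟨TotalMonotoneApprox a, fun _ => eVal a⟩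

/-! ### Turing functionals -/

/-- The oracle information available at stage `s`: the first `s` bits of `p`. -/
def initSeg (p : Cantor) (s : ℕ) : List Bool := (List.range s).map p

/-- A `{0,1}`-valued Turing functional on Cantor space, presented by a computable monotone
finite-prefix approximation: `approx σ n = some b` means that the computation on input `n`
with oracle prefix `σ` has converged, with output `b`. -/
structure TuringFunctional where
  approx : List Bool → ℕ → Option Bool
  computable : Computable₂ approx
  mono : ∀ σ τ n b, σ <+: τ → approx σ n = some b → approx τ n = some b

namespace TuringFunctional

/-- `Φ^p(n)[s]↓`. -/
def ConvAt (Φ : TuringFunctional) (p : Cantor) (n s : ℕ) : Prop :=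
  (Φ.approx (initSeg p s) n).isSome = true

/-- `s` is least such that `Φ^p(n)[s]↓`. -/
def LeastStage (Φ : TuringFunctional) (p : Cantor) (n s : ℕ) : Prop :=
  Φ.ConvAt p n s ∧ ∀ t, t < s → ¬ Φ.ConvAt p n t

/-- Convention 2.1: if `Φ^p(n)[s]↓` then `Φ^p(m)[s]↓` for all `m < n`, and for each `s`
there is at most one `n` for which `s` is least with `Φ^p(n)[s]↓`. -/
def Convention (Φ : TuringFunctional) : Prop :=
  (∀ (p : Cantor) (s n m : ℕ), m < n → Φ.ConvAt p n s → Φ.ConvAt p m s) ∧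
  (∀ (p : Cantor) (s n n' : ℕ), Φ.LeastStage p n s → Φ.LeastStage p n' s → n = n')

/-- The partial function `⊆ 2^ω → 2^ω` computed by `Φ`; it is defined at `p` exactly when
`Φ(p)` is total, in which case its value is the map `n ↦ Φ^p(n)`. -/
def eval (Φ : TuringFunctional) : Cantor →. Cantor :=
  fun p => ⟨∀ n, ∃ s b, Φ.approx (initSeg p s) n = some b,
    fun h n => (h n).choose_spec.choose⟩

end TuringFunctional

/-- `a_{Φ(p)}`: the set of all `⟨n,s,i⟩` where `s` is least such that `Φ^p(n)[s]↓ = i`. -/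
def approxSeq (Φ : TuringFunctional) (p : Cantor) : Cantor := fun k =>
  decide (∃ n s b, k = tpl n s (Bool.toNat b) ∧ Φ.LeastStage p n s ∧
    Φ.approx (initSeg p s) n = some b)

/-- Turing reducibility `q ≤_T p` on Cantor space. -/
def TuringLe (q p : Cantor) : Prop := ∃ Φ : TuringFunctional, Φ.eval p = Part.some q

/-! ### Pairing on Cantor space -/

/-- The effective join `⟨p,q⟩` on Cantor space. -/
def pairC (p q : Cantor) : Cantor := fun n => if n % 2 = 0 then p (n / 2) else q (n / 2)

def leftC (r : Cantor) : Cantor := fun n => r (2 * n)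

def rightC (r : Cantor) : Cantor := fun n => r (2 * n + 1)

/-- The singleton `{i} ⊆ ω` as an element of Cantor space. -/
def natSet (i : ℕ) : Cantor := fun n => decide (n = i)

/-- `⟨i,p⟩`, i.e. `⟨{i},p⟩`. -/
def inC (i : ℕ) (p : Cantor) : Cantor := pairC (natSet i) p

lemma leftC_pairC (p q : Cantor) : leftC (pairC p q) = p := by
  funext n
  have h1 : 2 * n % 2 = 0 := by omega
  have h2 : 2 * n / 2 = n := by omega
  simp [leftC, pairC, h1, h2]

lemma rightC_pairC (p q : Cantor) : rightC (pairC p q) = q := by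
  funext n
  have h1 : (2 * n + 1) % 2 = 1 := by omega
  have h2 : (2 * n + 1) / 2 = n := by omega
  simp [rightC, pairC, h1, h2]

lemma tpl_inj {n s i n' s' i' : ℕ} (h : tpl n s i = tpl n' s' i') :
    n = n' ∧ s = s' ∧ i = i' := by
  unfold tpl at h
  rw [Nat.pair_eq_pair] at h
  rcases h with ⟨h1, h2⟩
  rw [Nat.pair_eq_pair] at h2
  exact ⟨h1, h2.1, h2.2⟩

lemma toNat_lt_two (b : Bool) : b.toNat < 2 := by cases b <;> decide

/-- Encoding of `q ∈ 2^ω` as a total monotone approximation evaluating to `q`. -/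
def maEncode (q : Cantor) : Cantor := fun k => decide (∃ n, k = tpl n n (q n).toNat)

lemma maEncode_mem {q : Cantor} {k : ℕ} :
    maEncode q k = true ↔ ∃ n, k = tpl n n (q n).toNat := by
  simp [maEncode]

lemma maEncode_total (q : Cantor) : TotalMonotoneApprox (maEncode q) := by
  refine ⟨⟨?_, ?_, ?_⟩, ?_⟩
  · intro k hk
    obtain ⟨n, rfl⟩ := maEncode_mem.mp hk
    exact ⟨n, n, (q n).toNat, toNat_lt_two _, rfl⟩
  · intro n s t i j h1 h2
    obtain ⟨m, hm⟩ := maEncode_mem.mp h1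
    obtain ⟨m', hm'⟩ := maEncode_mem.mp h2
    obtain ⟨e1, e2, e3⟩ := tpl_inj hm
    obtain ⟨f1, f2, f3⟩ := tpl_inj hm'
    have hmm' : m = m' := by omega
    refine ⟨by omega, by rw [e3, f3, hmm']⟩
  · intro m n s t i j h1 h2 hmn
    obtain ⟨u, hu⟩ := maEncode_mem.mp h1
    obtain ⟨v, hv⟩ := maEncode_mem.mp h2
    obtain ⟨e1, e2, _⟩ := tpl_inj hu
    obtain ⟨f1, f2, _⟩ := tpl_inj hv
    omega
  · intro n
    exact ⟨n, (q n).toNat, toNat_lt_two _, maEncode_mem.mpr ⟨n, rfl⟩⟩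

lemma eVal_maEncode (q : Cantor) : eVal (maEncode q) = q := by
  funext n
  have hiff : (∃ s, maEncode q (tpl n s 1) = true) ↔ q n = true := by
    constructor
    · rintro ⟨s, hs⟩
      obtain ⟨m, hm⟩ := maEncode_mem.mp hs
      obtain ⟨e1, e2, e3⟩ := tpl_inj hm
      subst e1
      cases hq : q n
      · rw [hq] at e3; simp at e3
      · rfl
    · intro hq
      refine ⟨n, maEncode_mem.mpr ⟨n, ?_⟩⟩
      rw [hq]
      rfl
  cases hq : q n
  · have hne : ¬ (∃ s, maEncode q (tpl n s 1) = true) := by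
      intro h
      have ht := hiff.mp h
      rw [ht] at hq
      exact Bool.noConfusion hq
    simp [eVal, hne]
  · simp [eVal, hiff.mpr hq]

/-- An explicit non-(monotone approximation). -/
def badMA : Cantor := fun k => decide (k = tpl 0 0 0 ∨ k = tpl 0 1 0)

lemma badMA_not : ¬ TotalMonotoneApprox badMA := by
  rintro ⟨⟨-, h2, -⟩, -⟩
  have ha : badMA (tpl 0 0 0) = true := by simp [badMA]
  have hb : badMA (tpl 0 1 0) = true := by simp [badMA]
  have := (h2 0 0 1 0 0 ha hb).1
  omega

/-! ### Represented spaces -/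

/-- A represented space: a set `X` together with a partial surjection `δ : ⊆ 2^ω → X`. -/
structure RepSp : Type 1 where
  X : Type
  δ : Cantor →. X
  surj : ∀ x : X, ∃ p, x ∈ δ p

namespace RepSp

/-- The product representation of `X₀ × X₁`: `δ(⟨p₀,p₁⟩) = (δ₀(p₀), δ₁(p₁))`. -/
def prod (A B : RepSp) : RepSp where
  X := A.X × B.X
  δ := fun r => (A.δ (leftC r)).bind fun x => (B.δ (rightC r)).map fun y => (x, y)
  surj := by
    rintro ⟨x, y⟩
    obtain ⟨p, hp⟩ := A.surj x
    obtain ⟨q, hq⟩ := B.surj y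
    refine ⟨pairC p q, ?_⟩
    simp only [leftC_pairC, rightC_pairC, Part.mem_bind_iff]
    exact ⟨x, hp, Part.mem_map _ hq⟩

/-- The disjoint-union representation of `X₀ ⊔ X₁`: `δ(⟨i,p⟩) = ⟨i, δᵢ(p)⟩`. -/
def sum (A B : RepSp) : RepSp where
  X := A.X ⊕ B.X
  δ := fun r =>
    if leftC r = natSet 0 then (A.δ (rightC r)).map Sum.inl
    else if leftC r = natSet 1 then (B.δ (rightC r)).map Sum.inr
    else Part.none
  surj := by
    rintro (x | y)
    · obtain ⟨p, hp⟩ := A.surj x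
      refine ⟨inC 0 p, ?_⟩
      have e1 : leftC (inC 0 p) = natSet 0 := leftC_pairC _ _
      have e2 : rightC (inC 0 p) = p := rightC_pairC _ _
      simp only [e1, e2, if_pos rfl]
      exact Part.mem_map _ hp
    · obtain ⟨p, hp⟩ := B.surj y
      refine ⟨inC 1 p, ?_⟩
      have e1 : leftC (inC 1 p) = natSet 1 := leftC_pairC _ _
      have e2 : rightC (inC 1 p) = p := rightC_pairC _ _
      have hne : natSet 1 ≠ natSet 0 := by
        intro h
        have := congrFun h 0
        simp [natSet] at this
      simp only [e1, e2, hne, if_neg, if_pos rfl, ite_false, ite_true]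
      exact Part.mem_map _ hp

/-- The completion `Ŷ = Y ∪ {∞_Y}` (with `∞_Y` rendered as `none`), represented by
`δ_Ŷ(p) = δ_Y(e(p))` if `p` is a total monotone approximation with `e(p) ∈ dom(δ_Y)`, and
`δ_Ŷ(p) = ∞_Y` otherwise. -/
def hat (A : RepSp) : RepSp where
  X := Option A.X
  δ := fun p => Part.some (((evalMA p).bind A.δ).toOption)
  surj := by
    intro y
    match y with
    | none =>
        refine ⟨badMA, ?_⟩
        rw [Part.mem_some_iff]
        have hd : ¬ ((evalMA badMA).bind A.δ).Dom := by
          rintro ⟨h1, -⟩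
          exact badMA_not h1
        rw [eq_comm, Part.toOption_eq_none_iff]
        exact hd
    | some x =>
        obtain ⟨p, hp⟩ := A.surj x
        refine ⟨maEncode p, ?_⟩
        rw [Part.mem_some_iff, eq_comm, Part.toOption_eq_some_iff]
        refine Part.mem_bind_iff.mpr ?_
        refine ⟨p, ?_, hp⟩
        exact ⟨maEncode_total p, eVal_maEncode p⟩

end RepSp

/-! ### Partial multifunctions and the Weihrauch reducibilities -/

/-- A partial multifunction `f : ⊆ X ⇉ Y` between represented spaces: `f.f x` is the set of
solutions of the instance `x`, and the domain of `f` is the set of `x` with `f.f x ≠ ∅`. -/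
structure MFn : Type 1 where
  A : RepSp
  B : RepSp
  f : A.X → Set B.X

namespace MFn

/-- The coproduct `f ⊔ g`. -/
def sqcup (f g : MFn) : MFn where
  A := f.A.sum g.A
  B := f.B.sum g.B
  f := Sum.elim (fun x => Sum.inl '' f.f x) (fun y => Sum.inr '' g.f y)

/-- The meet `f ⊓ g`, with `(f ⊓ g)(⟨x,y⟩) = ({0} × f(x)) ∪ ({1} × g(y))` for
`x ∈ dom f`, `y ∈ dom g`. -/
def sqcap (f g : MFn) : MFn where
  A := f.A.prod g.A
  B := f.B.sum g.B
  f := fun xy =>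
    if (f.f xy.1).Nonempty ∧ (g.f xy.2).Nonempty then
      (Sum.inl '' f.f xy.1) ∪ (Sum.inr '' g.f xy.2)
    else ∅

/-- The join `f ⊞ g : ⊆ X₀ ⊔ X₁ ⇉ Ŷ₀ × Ŷ₁`, with `(f ⊞ g)(⟨0,x⟩) = f(x) × Ŷ₁` and
`(f ⊞ g)(⟨1,x⟩) = Ŷ₀ × g(x)`. -/
def boxplus (f g : MFn) : MFn where
  A := f.A.sum g.A
  B := (f.B.hat).prod (g.B.hat)
  f := Sum.elim
    (fun x => (Option.some '' f.f x) ×ˢ (Set.univ : Set (Option g.B.X)))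
    (fun y => (Set.univ : Set (Option f.B.X)) ×ˢ (Option.some '' g.f y))

end MFn

/-- `F ⊢ f`: the partial function `F : ⊆ 2^ω → 2^ω` is a realizer of `f`, i.e.
`δ_Y F(p) ∈ f δ_X(p)` for every `p ∈ dom(f δ_X)`. -/
def Realizes (F : Cantor →. Cantor) (f : MFn) : Prop :=
  ∀ p x, x ∈ f.A.δ p → (f.f x).Nonempty →
    ∃ q ∈ F p, ∃ y ∈ f.B.δ q, y ∈ f.f x

/-- Composition of partial functions on Cantor space: `pcomp F G = F ∘ G`. -/
def pcomp (F G : Cantor →. Cantor) : Cantor →. Cantor := fun p => (G p).bind F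

/-- Strong Weihrauch reducibility: `f ≤_sW g` iff there are Turing functionals `Φ, Ψ` with
`Ψ G Φ ⊢ f` for every `G ⊢ g`. -/
def sWLe (f g : MFn) : Prop :=
  ∃ Φ Ψ : TuringFunctional, ∀ G : Cantor →. Cantor, Realizes G g →
    Realizes (pcomp Ψ.eval (pcomp G Φ.eval)) f

/-- Strong Weihrauch equivalence. -/
def sWEq (f g : MFn) : Prop := sWLe f g ∧ sWLe g f

/-- Weihrauch reducibility: `f ≤_W g` iff there are Turing functionals `Φ, Ψ` with
`Ψ⟨id, G Φ⟩ ⊢ f` for every `G ⊢ g`. -/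
def wLe (f g : MFn) : Prop :=
  ∃ Φ Ψ : TuringFunctional, ∀ G : Cantor →. Cantor, Realizes G g →
    Realizes (fun p => (pcomp G Φ.eval p).bind fun q => Ψ.eval (pairC p q)) f

/-- Weihrauch equivalence. -/
def wEq (f g : MFn) : Prop := wLe f g ∧ wLe g f

/-- Cantor space as a represented space, with the identity representation. -/
def CantorSp : RepSp where
  X := Cantor
  δ := fun p => Part.some p
  surj := fun p => ⟨p, Part.mem_some_iff.mpr rfl⟩

/-- A partial multifunction on Cantor space, viewed as a multifunction on represented
spaces via the identity representation. -/
def ofCantor (F : Cantor → Set Cantor) : MFn := ⟨CantorSp, CantorSp, F⟩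

/-! ### Further definitions used in the statements -/

/-- `c` is an index for the Turing functional `Ψ`. -/
def codesTF (c : Nat.Partrec.Code) (Ψ : TuringFunctional) : Prop :=
  ∀ (σ : List Bool) (n : ℕ),
    c.eval (Nat.pair (Encodable.encode σ) n) = Part.some (Encodable.encode (Ψ.approx σ n))

/-- The multifunction `h` of Lemma 4.4: `h(⟨0,p⟩)` consists of all pairs `⟨a,q⟩` where `a`
is a total monotone approximation with `e(a) ∈ F(p)`, and `h(⟨1,p⟩)` of all pairs `⟨q,a⟩`
where `a` is a total monotone approximation with `e(a) ∈ G(p)`. -/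
def hJoin (F G : Cantor → Set Cantor) : Cantor → Set Cantor := fun r =>
  {z | leftC r = natSet 0 ∧
    ∃ a q, z = pairC a q ∧ TotalMonotoneApprox a ∧ eVal a ∈ F (rightC r)} ∪
  {z | leftC r = natSet 1 ∧
    ∃ q a, z = pairC q a ∧ TotalMonotoneApprox a ∧ eVal a ∈ G (rightC r)}

/-- A single-valued partial function on Cantor space, viewed as a partial multifunction on
represented spaces (via the identity representation). -/
def pfnToM (F : Cantor →. Cantor) : MFn := ofCantor fun p => {q | q ∈ F p}

/-- The single-point partial function `{p} → {q}`. -/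
def singleFn (p q : Cantor) : MFn := ofCantor fun r => if r = p then {q} else ∅

/-- `A` is Medvedev reducible to `B`. -/
def MedvedevLe (A B : Set Cantor) : Prop :=
  ∃ Φ : TuringFunctional, ∀ p ∈ B, ∃ q ∈ Φ.eval p, q ∈ A

/-- The all-zero sequence `0^ω`. -/
def zeroSeq : Cantor := fun _ => false

/-- `d_A : A → {0^ω}`. -/
def dFn (A : Set Cantor) : MFn := ofCantor fun p => if p ∈ A then {zeroSeq} else ∅

/-- `A ⊔ B ⊆ 2^ω`: all `⟨i,p⟩` with `i < 2` and `p ∈ A` if `i = 0`, `p ∈ B` if `i = 1`. -/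
def setSum (A B : Set Cantor) : Set Cantor :=
  {r | ∃ p ∈ A, r = inC 0 p} ∪ {r | ∃ p ∈ B, r = inC 1 p}

/-- `A × B ⊆ 2^ω`: all pairs `⟨p,q⟩` with `p ∈ A` and `q ∈ B`. -/
def setProd (A B : Set Cantor) : Set Cantor := {r | ∃ p ∈ A, ∃ q ∈ B, r = pairC p q}

/-- `p` is a name of an instance of `f`. -/
def domName (f : MFn) (p : Cantor) : Prop := ∃ x ∈ f.A.δ p, (f.f x).Nonempty

/-- `q` is a name of a solution to the instance of `f` named by `p`. -/
def solName (f : MFn) (p q : Cantor) : Prop :=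
  ∃ x ∈ f.A.δ p, ∃ y ∈ f.B.δ q, y ∈ f.f x

/-- Strong computable reducibility `f ≤_sc g`: every name `p` of an instance of `f`
computes a name `p'` of an instance of `g` such that every name of a solution to the
latter computes a name of a solution to the former. -/
def scLe (f g : MFn) : Prop :=
  ∀ p, domName f p → ∃ p', TuringLe p' p ∧ domName g p' ∧
    ∀ q, solName g p' q → ∃ z, TuringLe z q ∧ solName f p z

/-- Strong computable equivalence. -/
def scEq (f g : MFn) : Prop := scLe f g ∧ scLe g f

/-!
Take for `f, g, h` the maps `0^ω ↦ A`, `0^ω ↦ B`, `0^ω ↦ C` defined only at `0^ω`, where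
`A, B, C` are built by finite-extension forcing so that no Turing functional computes (the
relevant part of) one of them from the names of solutions built from the others
(`IsGeneric`). Suppose `Φ, Ψ` witness the reduction and let the realizer of the right-hand
side answer `⟨A⟩` for `f ⊓ h` and `⟨B⟩` for `g ⊓ h`. On the instance of `g`, genericity
leaves `Ψ` one option: answer `B` through `f ⊞ g` from `⟨B⟩`, so `Ψ(⟨B⟩)` has first bit `1`,
already fixed after reading some `u` bits. Now answer `f ⊓ h` instead by `C`, encoded by a
monotone approximation delayed so that the name agrees with `⟨B⟩` on its first `u` bits. On
the instance of `f`, genericity forces `Ψ` to answer `C` through `h` from that name, i.e. with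
first bit `0`, contradicting the commitment made on the common prefix.
-/

open PiNat (cylinder mem_cylinder_iff)

/-! ### Turing functionals -/

lemma initSeg_prefix (p : Cantor) {s t : ℕ} (h : s ≤ t) : initSeg p s <+: initSeg p t := by
  refine List.IsPrefix.map p ?_
  rw [List.prefix_iff_eq_take, List.take_range, List.length_range, Nat.min_eq_left h]

lemma initSeg_eq_of_mem_cylinder {p p' : Cantor} {u : ℕ} (h : p' ∈ cylinder p u) :
    initSeg p' u = initSeg p u :=
  List.map_congr_left fun i hi => mem_cylinder_iff.1 h i (List.mem_range.1 hi)

namespace TuringFunctional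

lemma apply_eq_of_approx_eq_some {Φ : TuringFunctional} {p q : Cantor} (hq : q ∈ Φ.eval p)
    {n u : ℕ} {b : Bool} (h : Φ.approx (initSeg p u) n = some b) : q n = b := by
  obtain ⟨hdom, rfl⟩ := hq
  have hv := (hdom n).choose_spec.choose_spec
  show (hdom n).choose_spec.choose = b
  rcases le_total u (hdom n).choose with huv | hvu
  · exact Option.some_injective _ (hv.symm.trans (Φ.mono _ _ _ _ (initSeg_prefix p huv) h))
  · exact Option.some_injective _ ((Φ.mono _ _ _ _ (initSeg_prefix p hvu) hv).symm.trans h)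

lemma exists_approx_eq_some {Φ : TuringFunctional} {p q : Cantor} (hq : q ∈ Φ.eval p)
    (n : ℕ) : ∃ u, Φ.approx (initSeg p u) n = some (q n) := by
  obtain ⟨u, b, hb⟩ := hq.1 n
  exact ⟨u, apply_eq_of_approx_eq_some hq hb ▸ hb⟩

def toComputable (Φ : TuringFunctional) : {f : ℕ → ℕ // Computable f} :=
  ⟨fun k => Encodable.encode ((Encodable.decode k : Option (List Bool × ℕ)).map
      fun x => Φ.approx x.1 x.2),
    Computable.encode.comp (Computable.option_map Computable.decode
      (Φ.computable.comp (Computable.fst.comp Computable.snd)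
        (Computable.snd.comp Computable.snd)))⟩

instance : Countable TuringFunctional := by
  refine Function.Injective.countable (f := toComputable) fun Φ Ψ h => ?_
  obtain ⟨a, ca, ma⟩ := Φ
  obtain ⟨b, cb, mb⟩ := Ψ
  congr
  funext σ n
  simpa [toComputable] using congrFun (congrArg Subtype.val h) (Encodable.encode (σ, n))

end TuringFunctional

/-! ### Forcing -/

def extract (pos : ℕ → ℕ → ℕ) (q : Cantor) : Cantor :=
  fun n => decide (∃ s, q (pos n s) = true)

structure Requirement (ι : Type) where
  functional : TuringFunctional
  target : ι
  oracle : (ι → Cantor) → Cantor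
  pos : ℕ → ℕ → ℕ
  oracle_mem_cylinder : ∀ (u : ℕ) (X Y : ι → Cantor),
    (∀ j ≠ target, Y j ∈ cylinder (X j) u) → oracle Y ∈ cylinder (oracle X) u

structure Condition (ι : Type) where
  reals : ι → Cantor
  len : ℕ

namespace Condition

variable {ι : Type}

def Allows (c : Condition ι) (X : ι → Cantor) : Prop :=
  ∀ j, X j ∈ cylinder (c.reals j) c.len

lemma Allows.of_mem_cylinder {c : Condition ι} {X Y : ι → Cantor} (hX : c.Allows X)
    (hY : ∀ j, Y j ∈ cylinder (X j) c.len) : c.Allows Y := fun j =>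
  mem_cylinder_iff.2 fun i hi =>
    (mem_cylinder_iff.1 (hY j) i hi).trans (mem_cylinder_iff.1 (hX j) i hi)

instance : Preorder (Condition ι) where
  le c d := c.len ≤ d.len ∧ c.Allows d.reals
  le_refl c := ⟨le_rfl, fun _ => PiNat.self_mem_cylinder _ _⟩
  le_trans _ _ _ hcd hde :=
    ⟨hcd.1.trans hde.1, hcd.2.of_mem_cylinder fun j => PiNat.cylinder_anti _ hcd.1 (hde.2 j)⟩

end Condition

namespace Requirement

variable {ι : Type} (R : Requirement ι)

def MetBy (X : ι → Cantor) : Prop :=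
  ∀ q ∈ R.functional.eval (R.oracle X), extract R.pos q ≠ X R.target

def setTarget (X : ι → Cantor) (n : ℕ) (b : Bool) : ι → Cantor :=
  Function.update X R.target (Function.update (X R.target) n b)

lemma setTarget_mem_cylinder (X : ι → Cantor) (n : ℕ) (b : Bool) (j : ι) :
    R.setTarget X n b j ∈ cylinder (X j) n := by
  rcases eq_or_ne j R.target with rfl | hj
  · simpa [setTarget] using PiNat.update_mem_cylinder (X R.target) n b
  · simp [setTarget, hj]

lemma allows_of_allows_setTarget {X Z : ι → Cantor} {n m : ℕ} {b : Bool} (hnm : n < m)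
    (hZ : (⟨R.setTarget X n b, m⟩ : Condition ι).Allows Z) :
    Z R.target n = b ∧ (⟨X, n⟩ : Condition ι).Allows Z ∧
      ∀ j ≠ R.target, Z j ∈ cylinder (X j) m := by
  refine ⟨?_, fun j => mem_cylinder_iff.2 fun i hi => ?_, fun j hj => ?_⟩
  · simpa [setTarget] using mem_cylinder_iff.1 (hZ R.target) n hnm
  · have := mem_cylinder_iff.1 (hZ j) i (hi.trans hnm)
    rcases eq_or_ne j R.target with rfl | hj
    · simpa [setTarget, hi.ne] using this
    · simpa [setTarget, hj] using this
  · simpa [setTarget, hj] using hZ j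

def Forces (c : Condition ι) (w : (ι → Cantor) × ℕ × ℕ) : Prop :=
  c.Allows w.1 ∧
    R.functional.approx (initSeg (R.oracle w.1) w.2.1) (R.pos c.len w.2.2) = some true

/- Diagonalize at bit `c.len` of the target: if some extension `Y` of `c` makes the functional
output `1` at a position of that pattern bit after reading `u` bits, commit to `Y` up to `u` and
set the target bit to `0`; otherwise no extension ever does, and the target bit is set to `1`. -/
def step (c : Condition ι) : Condition ι :=
  if h : ∃ w, R.Forces c w then
    ⟨R.setTarget h.choose.1 c.len false, max h.choose.2.1 c.len + 1⟩
  else ⟨R.setTarget c.reals c.len true, c.len + 1⟩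

lemma len_lt_step (c : Condition ι) : c.len < (R.step c).len := by
  unfold step
  split_ifs
  exacts [Nat.lt_succ_of_le (le_max_right _ _), Nat.lt_succ_self _]

lemma le_step (c : Condition ι) : c ≤ R.step c := by
  refine ⟨(R.len_lt_step c).le, ?_⟩
  unfold step
  split_ifs with h
  exacts [h.choose_spec.1.of_mem_cylinder (R.setTarget_mem_cylinder _ _ _),
    R.setTarget_mem_cylinder _ _ _]

lemma extract_ne_of_allows_step (c : Condition ι) {Z : ι → Cantor} (hZ : (R.step c).Allows Z) :
    ∀ q ∈ R.functional.eval (R.oracle Z), extract R.pos q c.len ≠ Z R.target c.len := by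
  intro q hq
  unfold step at hZ
  split_ifs at hZ with h
  · obtain ⟨-, happrox⟩ := h.choose_spec
    obtain ⟨hZt, -, hZY⟩ := R.allows_of_allows_setTarget (by omega) hZ
    have hZu : ∀ j ≠ R.target, Z j ∈ cylinder (h.choose.1 j) h.choose.2.1 := fun j hj =>
      PiNat.cylinder_anti _ (by omega) (hZY j hj)
    have := R.functional.apply_eq_of_approx_eq_some hq
      (initSeg_eq_of_mem_cylinder (R.oracle_mem_cylinder _ _ _ hZu) ▸ happrox)
    rw [hZt]
    simp only [extract, ne_eq, decide_eq_false_iff_not, not_not]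
    exact ⟨_, this⟩
  · obtain ⟨hZt, hZc, -⟩ := R.allows_of_allows_setTarget (Nat.lt_succ_self _) hZ
    rw [hZt]
    simp only [extract, ne_eq, decide_eq_true_eq, not_exists]
    intro s hs
    obtain ⟨u, hu⟩ := R.functional.exists_approx_eq_some hq (R.pos c.len s)
    exact h ⟨⟨Z, u, s⟩, hZc, hs ▸ hu⟩

end Requirement

section Construction

variable {ι : Type} (R : ℕ → Requirement ι)

def stage : ℕ → Condition ι
  | 0 => ⟨fun _ _ => false, 0⟩
  | k + 1 => (R k).step (stage k)

lemma stage_mono : Monotone (stage R) :=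
  monotone_nat_of_le_succ fun k => (R k).le_step (stage R k)

lemma le_len_stage (k : ℕ) : k ≤ (stage R k).len := by
  induction k with
  | zero => exact Nat.zero_le _
  | succ k ih => exact ih.trans_lt ((R k).len_lt_step _)

def limit (j : ι) (i : ℕ) : Bool := (stage R (i + 1)).reals j i

lemma allows_limit (k : ℕ) : (stage R k).Allows (limit R) := fun j =>
  mem_cylinder_iff.2 fun i hi => by
    have hk := stage_mono R (le_max_left k (i + 1))
    have hi' := stage_mono R (le_max_right k (i + 1))
    rw [limit, ← mem_cylinder_iff.1 (hi'.2 j) i (le_len_stage R (i + 1)),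
      mem_cylinder_iff.1 (hk.2 j) i hi]

lemma metBy_limit (k : ℕ) : (R k).MetBy (limit R) := fun q hq h =>
  (R k).extract_ne_of_allows_step (stage R k) (allows_limit R (k + 1)) q hq (congrFun h _)

end Construction

theorem Requirement.exists_forall_metBy {ι : Type} {S : Set (Requirement ι)}
    (hS : S.Countable) : ∃ X : ι → Cantor, ∀ R ∈ S, R.MetBy X := by
  rcases S.eq_empty_or_nonempty with rfl | hne
  · exact ⟨fun _ _ => false, by simp⟩
  obtain ⟨R, rfl⟩ := hS.exists_eq_range hne
  exact ⟨limit R, Set.forall_mem_range.2 (metBy_limit R)⟩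

/-! ### Delayed monotone approximations -/

def delayEnc (N : ℕ) (x : Cantor) : Cantor :=
  fun k => decide (∃ n, k = tpl n (n + N) (x n).toNat)

lemma delayEnc_eq_true {N : ℕ} {x : Cantor} {k : ℕ} :
    delayEnc N x k = true ↔ ∃ n, k = tpl n (n + N) (x n).toNat := decide_eq_true_iff

lemma totalMonotoneApprox_delayEnc (N : ℕ) (x : Cantor) :
    TotalMonotoneApprox (delayEnc N x) := by
  simp only [TotalMonotoneApprox, MonotoneApprox, delayEnc_eq_true]
  refine ⟨⟨?_, ?_, ?_⟩, fun n => ⟨_, _, toNat_lt_two (x n), n, rfl⟩⟩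
  · rintro k ⟨n, rfl⟩
    exact ⟨_, _, _, toNat_lt_two (x n), rfl⟩
  · rintro n s t i j ⟨m, hm⟩ ⟨m', hm'⟩
    obtain ⟨rfl, rfl, rfl⟩ := tpl_inj hm
    obtain ⟨rfl, rfl, rfl⟩ := tpl_inj hm'
    exact ⟨rfl, rfl⟩
  · rintro m n s t i j ⟨m', hm⟩ ⟨n', hn⟩ hmn
    obtain ⟨rfl, rfl, -⟩ := tpl_inj hm
    obtain ⟨rfl, rfl, -⟩ := tpl_inj hn
    omega

lemma eVal_delayEnc (N : ℕ) (x : Cantor) : eVal (delayEnc N x) = x := by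
  funext n
  simp only [eVal, delayEnc_eq_true]
  cases hx : x n
  · simp only [decide_eq_false_iff_not, not_exists]
    intro s m h
    obtain ⟨rfl, -, h⟩ := tpl_inj h
    simp [hx] at h
  · exact decide_eq_true ⟨n + N, n, by rw [hx]; rfl⟩

lemma delayEnc_apply_of_lt {N : ℕ} (x : Cantor) {k : ℕ} (hk : k < N) :
    delayEnc N x k = false := by
  rw [← Bool.not_eq_true, delayEnc_eq_true]
  rintro ⟨n, rfl⟩
  have : n + N ≤ tpl n (n + N) (x n).toNat :=
    (Nat.left_le_pair _ _).trans (Nat.right_le_pair _ _)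
  omega

lemma delayEnc_mem_cylinder {N u : ℕ} {x y : Cantor} (h : y ∈ cylinder x u) :
    delayEnc N y ∈ cylinder (delayEnc N x) u := by
  refine mem_cylinder_iff.2 fun k hk => ?_
  simp only [delayEnc]
  congr 1
  refine propext (exists_congr fun n => ?_)
  constructor <;> rintro rfl <;> rw [mem_cylinder_iff.1 h n ((Nat.left_le_pair _ _).trans_lt hk)]

lemma pairC_mem_cylinder {u : ℕ} {x x' y y' : Cantor} (hx : x' ∈ cylinder x u)
    (hy : y' ∈ cylinder y u) : pairC x' y' ∈ cylinder (pairC x y) u := by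
  refine mem_cylinder_iff.2 fun k hk => ?_
  have hk2 : k / 2 < u := (Nat.div_le_self k 2).trans_lt hk
  simp only [pairC]
  split_ifs
  exacts [mem_cylinder_iff.1 hx _ hk2, mem_cylinder_iff.1 hy _ hk2]

lemma inC_mem_cylinder (i : ℕ) {u : ℕ} {x y : Cantor} (h : y ∈ cylinder x u) :
    inC i y ∈ cylinder (inC i x) u :=
  pairC_mem_cylinder (PiNat.self_mem_cylinder _ _) h

/-! ### Names of solutions -/

lemma natSet_zero_ne_one : natSet 0 ≠ natSet 1 := fun h => by
  simpa [natSet] using congrFun h 0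

namespace RepSp

variable {A B : RepSp} {r : Cantor}

lemma mem_prod_δ {x : A.X × B.X} :
    x ∈ (A.prod B).δ r ↔ x.1 ∈ A.δ (leftC r) ∧ x.2 ∈ B.δ (rightC r) := by
  obtain ⟨a, b⟩ := x
  show (a, b) ∈ ((A.δ (leftC r)).bind fun x => (B.δ (rightC r)).map fun y => (x, y) :
    Part (A.X × B.X)) ↔ _
  simp [Part.mem_bind_iff, Part.mem_map_iff]

lemma inl_mem_sum_δ {x : A.X} :
    Sum.inl x ∈ (A.sum B).δ r ↔ leftC r = natSet 0 ∧ x ∈ A.δ (rightC r) := by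
  show Sum.inl x ∈ (if leftC r = natSet 0 then (A.δ (rightC r)).map Sum.inl
    else if leftC r = natSet 1 then (B.δ (rightC r)).map Sum.inr else Part.none :
      Part (A.X ⊕ B.X)) ↔ _
  split_ifs with h0 h1 <;> simp [*, natSet_zero_ne_one.symm, Part.mem_map_iff]

lemma inr_mem_sum_δ {y : B.X} :
    Sum.inr y ∈ (A.sum B).δ r ↔ leftC r = natSet 1 ∧ y ∈ B.δ (rightC r) := by
  show Sum.inr y ∈ (if leftC r = natSet 0 then (A.δ (rightC r)).map Sum.inl
    else if leftC r = natSet 1 then (B.δ (rightC r)).map Sum.inr else Part.none :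
      Part (A.X ⊕ B.X)) ↔ _
  split_ifs with h0 h1 <;> simp [*, natSet_zero_ne_one, Part.mem_map_iff]

lemma some_mem_hat_δ {x : A.X} :
    some x ∈ A.hat.δ r ↔ TotalMonotoneApprox r ∧ x ∈ A.δ (eVal r) := by
  show some x ∈ (Part.some ((evalMA r).bind A.δ).toOption : Part (Option A.X)) ↔ _
  rw [Part.mem_some_iff, eq_comm, Part.toOption_eq_some_iff]
  exact Part.mem_bind_iff.trans
    ⟨fun ⟨_, ⟨h, rfl⟩, hx⟩ => ⟨h, hx⟩, fun ⟨h, hx⟩ => ⟨_, ⟨h, rfl⟩, hx⟩⟩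

end RepSp

namespace MFn

variable {f g : MFn}

lemma inl_mem_sqcap_f {x : f.A.X} {y : g.A.X} {a : f.B.X} :
    Sum.inl a ∈ (f.sqcap g).f (x, y) ↔ a ∈ f.f x ∧ (g.f y).Nonempty := by
  show Sum.inl a ∈ (if (f.f x).Nonempty ∧ (g.f y).Nonempty then
    (Sum.inl '' f.f x ∪ Sum.inr '' g.f y : Set (f.B.X ⊕ g.B.X)) else ∅) ↔ _
  split_ifs with h <;> simp only [Set.mem_union, Set.mem_image, Sum.inl.injEq, reduceCtorEq,
    exists_eq_right, and_false, exists_false, or_false, Set.mem_empty_iff_false, false_iff]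
  · exact ⟨fun ha => ⟨ha, h.2⟩, And.left⟩
  · exact fun ⟨ha, hy⟩ => h ⟨⟨a, ha⟩, hy⟩

lemma inr_mem_sqcap_f {x : f.A.X} {y : g.A.X} {b : g.B.X} :
    Sum.inr b ∈ (f.sqcap g).f (x, y) ↔ (f.f x).Nonempty ∧ b ∈ g.f y := by
  show Sum.inr b ∈ (if (f.f x).Nonempty ∧ (g.f y).Nonempty then
    (Sum.inl '' f.f x ∪ Sum.inr '' g.f y : Set (f.B.X ⊕ g.B.X)) else ∅) ↔ _
  split_ifs with h <;> simp only [Set.mem_union, Set.mem_image, Sum.inr.injEq, reduceCtorEq,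
    exists_eq_right, and_false, exists_false, false_or, Set.mem_empty_iff_false, false_iff]
  · exact ⟨fun hb => ⟨h.1, hb⟩, And.right⟩
  · exact fun ⟨hx, hb⟩ => h ⟨hx, ⟨b, hb⟩⟩

lemma mem_boxplus_f_inl {x : f.A.X} {z : Option f.B.X × Option g.B.X} :
    z ∈ (f.boxplus g).f (Sum.inl x) ↔ z.1 ∈ Option.some '' f.f x :=
  Set.mem_prod.trans (and_iff_left trivial)

lemma mem_boxplus_f_inr {x : g.A.X} {z : Option f.B.X × Option g.B.X} :
    z ∈ (f.boxplus g).f (Sum.inr x) ↔ z.2 ∈ Option.some '' g.f x :=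
  Set.mem_prod.trans (and_iff_right trivial)

lemma nonempty_of_sqcap_f_nonempty {x : f.A.X} {y : g.A.X}
    (h : ((f.sqcap g).f (x, y)).Nonempty) : (f.f x).Nonempty ∧ (g.f y).Nonempty := by
  obtain ⟨a | b, hz⟩ := h
  · exact ⟨⟨a, (inl_mem_sqcap_f.1 hz).1⟩, (inl_mem_sqcap_f.1 hz).2⟩
  · exact ⟨(inr_mem_sqcap_f.1 hz).1, ⟨b, (inr_mem_sqcap_f.1 hz).2⟩⟩

end MFn

def NamesSolution (f : MFn) (x : f.A.X) (q : Cantor) : Prop := ∃ y ∈ f.B.δ q, y ∈ f.f x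

section NamesSolution

variable {f g : MFn}

lemma namesSolution_sqcap_iff {x : f.A.X} {y : g.A.X} {q : Cantor} :
    NamesSolution (f.sqcap g) (x, y) q ↔
      (leftC q = natSet 0 ∧ NamesSolution f x (rightC q) ∧ (g.f y).Nonempty) ∨
      (leftC q = natSet 1 ∧ (f.f x).Nonempty ∧ NamesSolution g y (rightC q)) := by
  constructor
  · rintro ⟨a | b, hz, hzf⟩
    · obtain ⟨h0, ha⟩ := RepSp.inl_mem_sum_δ.1 hz
      obtain ⟨haf, hne⟩ := MFn.inl_mem_sqcap_f.1 hzf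
      exact Or.inl ⟨h0, ⟨a, ha, haf⟩, hne⟩
    · obtain ⟨h1, hb⟩ := RepSp.inr_mem_sum_δ.1 hz
      obtain ⟨hne, hbf⟩ := MFn.inr_mem_sqcap_f.1 hzf
      exact Or.inr ⟨h1, hne, ⟨b, hb, hbf⟩⟩
  · rintro (⟨h0, ⟨a, ha, haf⟩, hne⟩ | ⟨h1, hne, ⟨b, hb, hbf⟩⟩)
    · exact ⟨Sum.inl a, RepSp.inl_mem_sum_δ.2 ⟨h0, ha⟩,
        MFn.inl_mem_sqcap_f.2 ⟨haf, hne⟩⟩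
    · exact ⟨Sum.inr b, RepSp.inr_mem_sum_δ.2 ⟨h1, hb⟩,
        MFn.inr_mem_sqcap_f.2 ⟨hne, hbf⟩⟩

lemma namesSolution_boxplus_inl_iff {x : f.A.X} {w : Cantor} :
    NamesSolution (f.boxplus g) (Sum.inl x) w ↔
      TotalMonotoneApprox (leftC w) ∧ NamesSolution f x (eVal (leftC w)) := by
  constructor
  · rintro ⟨z, hz, hzf⟩
    obtain ⟨a, ha, hza⟩ := MFn.mem_boxplus_f_inl.1 hzf
    have hz1 := (RepSp.mem_prod_δ.1 hz).1
    rw [← hza] at hz1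
    obtain ⟨hw, hδ⟩ := RepSp.some_mem_hat_δ.1 hz1
    exact ⟨hw, a, hδ, ha⟩
  · rintro ⟨hw, a, ha, haf⟩
    exact ⟨(some a, ((evalMA (rightC w)).bind g.B.δ).toOption),
      RepSp.mem_prod_δ.2 ⟨RepSp.some_mem_hat_δ.2 ⟨hw, ha⟩, Part.mem_some _⟩,
      MFn.mem_boxplus_f_inl.2 ⟨a, haf, rfl⟩⟩

lemma namesSolution_boxplus_inr_iff {x : g.A.X} {w : Cantor} :
    NamesSolution (f.boxplus g) (Sum.inr x) w ↔
      TotalMonotoneApprox (rightC w) ∧ NamesSolution g x (eVal (rightC w)) := by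
  constructor
  · rintro ⟨z, hz, hzf⟩
    obtain ⟨a, ha, hza⟩ := MFn.mem_boxplus_f_inr.1 hzf
    have hz2 := (RepSp.mem_prod_δ.1 hz).2
    rw [← hza] at hz2
    obtain ⟨hw, hδ⟩ := RepSp.some_mem_hat_δ.1 hz2
    exact ⟨hw, a, hδ, ha⟩
  · rintro ⟨hw, a, ha, haf⟩
    exact ⟨(((evalMA (leftC w)).bind f.B.δ).toOption, some a),
      RepSp.mem_prod_δ.2 ⟨Part.mem_some _, RepSp.some_mem_hat_δ.2 ⟨hw, ha⟩⟩,
      MFn.mem_boxplus_f_inr.2 ⟨a, haf, rfl⟩⟩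

lemma namesSolution_pfnToM_iff {F : Cantor →. Cantor} {p q : Cantor} :
    NamesSolution (pfnToM F) p q ↔ q ∈ F p :=
  ⟨fun ⟨_, hy, hyf⟩ => Part.mem_some_iff.1 hy ▸ hyf, fun h => ⟨q, Part.mem_some _, h⟩⟩

end NamesSolution

def adversary (w₀ w₁ : Cantor) : Cantor →. Cantor :=
  fun r => Part.some (if leftC r = natSet 0 then w₀ else w₁)

lemma realizes_adversary {f g : MFn} {w₀ w₁ : Cantor}
    (h₀ : ∀ x, (f.f x).Nonempty → NamesSolution (f.boxplus g) (Sum.inl x) w₀)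
    (h₁ : ∀ x, (g.f x).Nonempty → NamesSolution (f.boxplus g) (Sum.inr x) w₁) :
    Realizes (adversary w₀ w₁) (f.boxplus g) := by
  rintro p (x | x) hp ⟨z, hz⟩
  · obtain ⟨a, ha, -⟩ := MFn.mem_boxplus_f_inl.1 hz
    refine ⟨w₀, ?_, h₀ x ⟨a, ha⟩⟩
    simp [adversary, (RepSp.inl_mem_sum_δ.1 hp).1]
  · obtain ⟨a, ha, -⟩ := MFn.mem_boxplus_f_inr.1 hz
    refine ⟨w₁, ?_, h₁ x ⟨a, ha⟩⟩
    simp [adversary, (RepSp.inr_mem_sum_δ.1 hp).1, natSet_zero_ne_one.symm]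

lemma exists_answer_of_realizes {f : MFn} {Φ Ψ : TuringFunctional} {w₀ w₁ : Cantor}
    (h : Realizes (pcomp Ψ.eval (pcomp (adversary w₀ w₁) Φ.eval)) f) {p : Cantor} {x : f.A.X}
    (hx : x ∈ f.A.δ p) (hne : (f.f x).Nonempty) :
    ∃ a, (a = w₀ ∨ a = w₁) ∧ ∃ q ∈ Ψ.eval a, NamesSolution f x q := by
  obtain ⟨q, hq, hsol⟩ := h p x hx hne
  obtain ⟨a, ha, hqa⟩ := Part.mem_bind_iff.1 hq
  obtain ⟨r, -, har⟩ := Part.mem_bind_iff.1 ha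
  refine ⟨a, ?_, q, hqa, hsol⟩
  rw [adversary, Part.mem_some_iff] at har
  split_ifs at har <;> simp [har]

/-! ### The counterexample -/

def pointFn (A : Cantor) : Cantor →. Cantor := PFun.res (fun _ => A) {zeroSeq}

lemma mem_pointFn {A p q : Cantor} : q ∈ pointFn A p ↔ p = zeroSeq ∧ q = A := by
  simp [pointFn, PFun.mem_res, eq_comm]

lemma namesSolution_pointFn {A p : Cantor} (h : ((pfnToM (pointFn A)).f p).Nonempty) :
    NamesSolution (pfnToM (pointFn A)) p A :=
  namesSolution_pfnToM_iff.2 (mem_pointFn.2 ⟨(mem_pointFn.1 h.some_mem).1, rfl⟩)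

def answerA (A : Cantor) : Cantor := pairC (delayEnc 0 (inC 0 A)) zeroSeq

def answerB (B : Cantor) : Cantor := pairC zeroSeq (delayEnc 0 (inC 0 B))

def answerCB (N : ℕ) (B C : Cantor) : Cantor :=
  pairC (delayEnc N (inC 1 C)) (delayEnc 0 (inC 0 B))

section Cylinders

variable {u : ℕ} {A A' B B' C C' : Cantor}

lemma answerA_mem_cylinder (h : A' ∈ cylinder A u) : answerA A' ∈ cylinder (answerA A) u :=
  pairC_mem_cylinder (delayEnc_mem_cylinder (inC_mem_cylinder 0 h)) (PiNat.self_mem_cylinder _ _)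

lemma answerB_mem_cylinder (h : B' ∈ cylinder B u) : answerB B' ∈ cylinder (answerB B) u :=
  pairC_mem_cylinder (PiNat.self_mem_cylinder _ _) (delayEnc_mem_cylinder (inC_mem_cylinder 0 h))

lemma answerCB_mem_cylinder (N : ℕ) (hB : B' ∈ cylinder B u) (hC : C' ∈ cylinder C u) :
    answerCB N B' C' ∈ cylinder (answerCB N B C) u :=
  pairC_mem_cylinder (delayEnc_mem_cylinder (inC_mem_cylinder 1 hC))
    (delayEnc_mem_cylinder (inC_mem_cylinder 0 hB))

lemma answerCB_mem_cylinder_answerB (N : ℕ) (B C : Cantor) :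
    answerCB N B C ∈ cylinder (answerB B) N :=
  pairC_mem_cylinder (mem_cylinder_iff.2 fun _ hk => delayEnc_apply_of_lt _ hk)
    (PiNat.self_mem_cylinder _ _)

end Cylinders

structure IsGeneric (A B C : Cantor) : Prop where
  a_answerB : ∀ (Ψ : TuringFunctional), ∀ q ∈ Ψ.eval (answerB B),
    eVal (leftC (rightC q)) ≠ A
  a_answerCB : ∀ (Ψ : TuringFunctional) (N : ℕ), ∀ q ∈ Ψ.eval (answerCB N B C),
    eVal (leftC (rightC q)) ≠ A
  c_answerB : ∀ (Ψ : TuringFunctional), ∀ q ∈ Ψ.eval (answerB B), rightC q ≠ C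
  b_answerA : ∀ (Ψ : TuringFunctional), ∀ q ∈ Ψ.eval (answerA A),
    eVal (rightC (rightC q)) ≠ B
  c_answerA : ∀ (Ψ : TuringFunctional), ∀ q ∈ Ψ.eval (answerA A), rightC q ≠ C

section Requirements

def posA (n s : ℕ) : ℕ := 2 * (2 * tpl n s 1) + 1

def posB (n s : ℕ) : ℕ := 2 * (2 * tpl n s 1 + 1) + 1

def posC (n _ : ℕ) : ℕ := 2 * n + 1

lemma extract_posA (q : Cantor) : extract posA q = eVal (leftC (rightC q)) := rfl

lemma extract_posB (q : Cantor) : extract posB q = eVal (rightC (rightC q)) := rfl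

lemma extract_posC (q : Cantor) : extract posC q = rightC q := by
  funext n
  cases h : rightC q n <;> simpa [extract, posC, rightC] using h

def reqA_answerB (Ψ : TuringFunctional) : Requirement (Fin 3) :=
  ⟨Ψ, 0, fun X => answerB (X 1), posA, fun _ _ _ h => answerB_mem_cylinder (h 1 (by decide))⟩

def reqA_answerCB (Ψ : TuringFunctional) (N : ℕ) : Requirement (Fin 3) :=
  ⟨Ψ, 0, fun X => answerCB N (X 1) (X 2), posA,
    fun _ _ _ h => answerCB_mem_cylinder N (h 1 (by decide)) (h 2 (by decide))⟩

def reqC_answerB (Ψ : TuringFunctional) : Requirement (Fin 3) :=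
  ⟨Ψ, 2, fun X => answerB (X 1), posC, fun _ _ _ h => answerB_mem_cylinder (h 1 (by decide))⟩

def reqB_answerA (Ψ : TuringFunctional) : Requirement (Fin 3) :=
  ⟨Ψ, 1, fun X => answerA (X 0), posB, fun _ _ _ h => answerA_mem_cylinder (h 0 (by decide))⟩

def reqC_answerA (Ψ : TuringFunctional) : Requirement (Fin 3) :=
  ⟨Ψ, 2, fun X => answerA (X 0), posC, fun _ _ _ h => answerA_mem_cylinder (h 0 (by decide))⟩

theorem exists_isGeneric : ∃ A B C, IsGeneric A B C := by
  obtain ⟨X, hX⟩ := Requirement.exists_forall_metBy (S := Set.range reqA_answerB ∪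
    Set.range (Function.uncurry reqA_answerCB) ∪ Set.range reqC_answerB ∪
    Set.range reqB_answerA ∪ Set.range reqC_answerA) (by simp [Set.countable_range])
  refine ⟨X 0, X 1, X 2, ⟨fun Ψ q hq => extract_posA q ▸ hX (reqA_answerB Ψ) (by simp) q hq,
    fun Ψ N q hq => extract_posA q ▸ hX (reqA_answerCB Ψ N) (by simp) q hq,
    fun Ψ q hq => extract_posC q ▸ hX (reqC_answerB Ψ) (by simp) q hq,
    fun Ψ q hq => extract_posB q ▸ hX (reqB_answerA Ψ) (by simp) q hq,
    fun Ψ q hq => extract_posC q ▸ hX (reqC_answerA Ψ) (by simp) q hq⟩⟩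

end Requirements

section Counterexample

variable {A B C : Cantor}

abbrev lhs (A B C : Cantor) : MFn :=
  ((pfnToM (pointFn A)).boxplus (pfnToM (pointFn B))).sqcap (pfnToM (pointFn C))

abbrev rhs (A B C : Cantor) : MFn :=
  ((pfnToM (pointFn A)).sqcap (pfnToM (pointFn C))).boxplus
    ((pfnToM (pointFn B)).sqcap (pfnToM (pointFn C)))

lemma mem_lhs_δ_inl :
    (Sum.inl zeroSeq, zeroSeq) ∈ (lhs A B C).A.δ (pairC (inC 0 zeroSeq) zeroSeq) :=
  RepSp.mem_prod_δ.2 ⟨RepSp.inl_mem_sum_δ.2 ⟨by rw [leftC_pairC, inC, leftC_pairC],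
    by rw [leftC_pairC, inC, rightC_pairC]; exact Part.mem_some _⟩,
    by rw [rightC_pairC]; exact Part.mem_some _⟩

lemma mem_lhs_δ_inr :
    (Sum.inr zeroSeq, zeroSeq) ∈ (lhs A B C).A.δ (pairC (inC 1 zeroSeq) zeroSeq) :=
  RepSp.mem_prod_δ.2 ⟨RepSp.inr_mem_sum_δ.2 ⟨by rw [leftC_pairC, inC, leftC_pairC],
    by rw [leftC_pairC, inC, rightC_pairC]; exact Part.mem_some _⟩,
    by rw [rightC_pairC]; exact Part.mem_some _⟩

lemma lhs_f_inl_nonempty : ((lhs A B C).f (Sum.inl zeroSeq, zeroSeq)).Nonempty :=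
  ⟨Sum.inr C, MFn.inr_mem_sqcap_f.2
    ⟨⟨(some A, none), MFn.mem_boxplus_f_inl.2 ⟨A, mem_pointFn.2 ⟨rfl, rfl⟩, rfl⟩⟩,
      mem_pointFn.2 ⟨rfl, rfl⟩⟩⟩

lemma lhs_f_inr_nonempty : ((lhs A B C).f (Sum.inr zeroSeq, zeroSeq)).Nonempty :=
  ⟨Sum.inr C, MFn.inr_mem_sqcap_f.2
    ⟨⟨(none, some B), MFn.mem_boxplus_f_inr.2 ⟨B, mem_pointFn.2 ⟨rfl, rfl⟩, rfl⟩⟩,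
      mem_pointFn.2 ⟨rfl, rfl⟩⟩⟩

lemma namesSolution_lhs_inl {q : Cantor}
    (h : NamesSolution (lhs A B C) (Sum.inl zeroSeq, zeroSeq) q) :
    (q 0 = true ∧ eVal (leftC (rightC q)) = A) ∨ (q 0 = false ∧ rightC q = C) := by
  rcases namesSolution_sqcap_iff.1 h with ⟨h0, hsol, -⟩ | ⟨h1, -, hsol⟩
  · exact Or.inl ⟨congrFun h0 0, (mem_pointFn.1 (namesSolution_pfnToM_iff.1
      (namesSolution_boxplus_inl_iff.1 hsol).2)).2⟩
  · exact Or.inr ⟨congrFun h1 0, (mem_pointFn.1 (namesSolution_pfnToM_iff.1 hsol)).2⟩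

lemma namesSolution_lhs_inr {q : Cantor}
    (h : NamesSolution (lhs A B C) (Sum.inr zeroSeq, zeroSeq) q) :
    (q 0 = true ∧ eVal (rightC (rightC q)) = B) ∨ (q 0 = false ∧ rightC q = C) := by
  rcases namesSolution_sqcap_iff.1 h with ⟨h0, hsol, -⟩ | ⟨h1, -, hsol⟩
  · exact Or.inl ⟨congrFun h0 0, (mem_pointFn.1 (namesSolution_pfnToM_iff.1
      (namesSolution_boxplus_inr_iff.1 hsol).2)).2⟩
  · exact Or.inr ⟨congrFun h1 0, (mem_pointFn.1 (namesSolution_pfnToM_iff.1 hsol)).2⟩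

lemma namesSolution_rhs_answerA :
    ∀ x, (((pfnToM (pointFn A)).sqcap (pfnToM (pointFn C))).f x).Nonempty →
      NamesSolution (rhs A B C) (Sum.inl x) (answerA A) := by
  rintro ⟨x, y⟩ hne
  obtain ⟨hx, hy⟩ := MFn.nonempty_of_sqcap_f_nonempty hne
  have hleft : leftC (answerA A) = delayEnc 0 (inC 0 A) := leftC_pairC _ _
  refine namesSolution_boxplus_inl_iff.2 ⟨hleft ▸ totalMonotoneApprox_delayEnc _ _, ?_⟩
  rw [hleft, eVal_delayEnc]
  exact namesSolution_sqcap_iff.2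
    (Or.inl ⟨leftC_pairC _ _, (rightC_pairC _ _).symm ▸ namesSolution_pointFn hx, hy⟩)

lemma namesSolution_rhs_answerCB (N : ℕ) :
    ∀ x, (((pfnToM (pointFn A)).sqcap (pfnToM (pointFn C))).f x).Nonempty →
      NamesSolution (rhs A B C) (Sum.inl x) (answerCB N B C) := by
  rintro ⟨x, y⟩ hne
  obtain ⟨hx, hy⟩ := MFn.nonempty_of_sqcap_f_nonempty hne
  have hleft : leftC (answerCB N B C) = delayEnc N (inC 1 C) := leftC_pairC _ _
  refine namesSolution_boxplus_inl_iff.2 ⟨hleft ▸ totalMonotoneApprox_delayEnc _ _, ?_⟩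
  rw [hleft, eVal_delayEnc]
  exact namesSolution_sqcap_iff.2
    (Or.inr ⟨leftC_pairC _ _, hx, (rightC_pairC _ _).symm ▸ namesSolution_pointFn hy⟩)

lemma namesSolution_rhs_answerB :
    ∀ x, (((pfnToM (pointFn B)).sqcap (pfnToM (pointFn C))).f x).Nonempty →
      NamesSolution (rhs A B C) (Sum.inr x) (answerB B) := by
  rintro ⟨x, y⟩ hne
  obtain ⟨hx, hy⟩ := MFn.nonempty_of_sqcap_f_nonempty hne
  have hright : rightC (answerB B) = delayEnc 0 (inC 0 B) := rightC_pairC _ _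
  refine namesSolution_boxplus_inr_iff.2 ⟨hright ▸ totalMonotoneApprox_delayEnc _ _, ?_⟩
  rw [hright, eVal_delayEnc]
  exact namesSolution_sqcap_iff.2
    (Or.inl ⟨leftC_pairC _ _, (rightC_pairC _ _).symm ▸ namesSolution_pointFn hx, hy⟩)

variable {Φ Ψ : TuringFunctional}

lemma IsGeneric.exists_approx_answerB (hgen : IsGeneric A B C)
    (hred : ∀ G, Realizes G (rhs A B C) →
      Realizes (pcomp Ψ.eval (pcomp G Φ.eval)) (lhs A B C)) :
    ∃ u, Ψ.approx (initSeg (answerB B) u) 0 = some true := by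
  obtain ⟨a, ha, q, hq, hsol⟩ := exists_answer_of_realizes
    (hred _ (realizes_adversary namesSolution_rhs_answerA namesSolution_rhs_answerB))
    mem_lhs_δ_inr lhs_f_inr_nonempty
  rcases ha with rfl | rfl <;> rcases namesSolution_lhs_inr hsol with ⟨h0, hB⟩ | ⟨-, hC⟩
  · exact absurd hB (hgen.b_answerA Ψ q hq)
  · exact absurd hC (hgen.c_answerA Ψ q hq)
  · exact h0 ▸ Ψ.exists_approx_eq_some hq 0
  · exact absurd hC (hgen.c_answerB Ψ q hq)

lemma IsGeneric.not_reduction (hgen : IsGeneric A B C)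
    (hred : ∀ G, Realizes G (rhs A B C) →
      Realizes (pcomp Ψ.eval (pcomp G Φ.eval)) (lhs A B C))
    {u : ℕ} (hu : Ψ.approx (initSeg (answerB B) u) 0 = some true) : False := by
  obtain ⟨a, ha, q, hq, hsol⟩ := exists_answer_of_realizes
    (hred _ (realizes_adversary (namesSolution_rhs_answerCB u) namesSolution_rhs_answerB))
    mem_lhs_δ_inl lhs_f_inl_nonempty
  rcases ha with rfl | rfl <;> rcases namesSolution_lhs_inl hsol with ⟨-, hA⟩ | ⟨h0, hC⟩
  · exact hgen.a_answerCB Ψ u q hq hA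
  · -- `answerCB u B C` agrees with `answerB B` on the `u` bits that fixed `Ψ`'s first output
    rw [← initSeg_eq_of_mem_cylinder (answerCB_mem_cylinder_answerB u B C)] at hu
    simpa [h0] using Ψ.apply_eq_of_approx_eq_some hq hu
  · exact hgen.a_answerB Ψ q hq hA
  · exact hgen.c_answerB Ψ q hq hC

end Counterexample

/-- Theorem 4.5: the lattice of strong Weihrauch degrees is not
distributive: there are single-valued partial functions `f, g, h` on Cantor space with
`(f ⊞ g) ⊓ h ≰_sW (f ⊓ h) ⊞ (g ⊓ h)`. -/
theorem stmt12 : ∃ F G H : Cantor →. Cantor,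
    ¬ sWLe (((pfnToM F).boxplus (pfnToM G)).sqcap (pfnToM H))
        (((pfnToM F).sqcap (pfnToM H)).boxplus ((pfnToM G).sqcap (pfnToM H))) := by
  obtain ⟨A, B, C, hgen⟩ := exists_isGeneric
  refine ⟨pointFn A, pointFn B, pointFn C, fun ⟨Φ, Ψ, hred⟩ => ?_⟩
  obtain ⟨u, hu⟩ := hgen.exists_approx_answerB hred
  exact hgen.not_reduction hred hu

end

end StrongWeihrauch
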